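/- arXiv:2512.23324 — 4 statements merged into one kernel-verified Lean document; each statement's English description precedes it below -/
import Mathlib

section
/- Let T be a finite transition system and A = (Q, q₀, δ, F) a deterministic finite automaton over subsets of AP × V (V a finite set of path variables) whose accepting states F are sinks (every transition from a state in F leads back into F). Suppose that for every tuple of paths (p_v)_{v∈V} in Paths(T)^V the induced run of A on the word i ↦ ⋃_{v∈V} {(a,v) | a ∈ ℓ(p_v(i))} eventually visits F. Then there exists a uniform bound N ∈ ℕ such that for every tuple of paths the run is in F at position N. -/
/-- A path in a transition system with directions. -/
def IsPath {L D : Type*} (linit : L) (κ : L → D → L) (p : ℕ → L) : Prop :=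
  p 0 = linit ∧ ∀ i, ∃ d : D, p (i + 1) = κ (p i) d

/-- The run of a deterministic automaton (with transition function `δ`) on an
infinite word `u`, starting in `q₀`. -/
def run {Q A : Type*} (q₀ : Q) (δ : Q → A → Q) (u : ℕ → A) : ℕ → Q
  | 0 => q₀
  | n + 1 => δ (run q₀ δ u n) (u n)

/-- Uniform-bound lemma: if for every tuple of paths the induced run of a DFA with
absorbing (sink) accepting states eventually visits `F`, then there is a single
position `N` at which all such runs are in `F`. -/
theorem stmt5 {L D AP V Q : Type*} [Fintype L] [Fintype D] [Fintype Q] [Fintype V]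
    (linit : L) (κ : L → D → L) (ℓ : L → Set AP)
    (q₀ : Q) (δ : Q → Set (AP × V) → Q) (F : Set Q)
    (hSink : ∀ q ∈ F, ∀ σ : Set (AP × V), δ q σ ∈ F)
    (h : ∀ P : V → ℕ → L, (∀ v, IsPath linit κ (P v)) →
        ∃ i, run q₀ δ (fun i => {x : AP × V | x.1 ∈ ℓ (P x.2 i)}) i ∈ F) :
    ∃ N : ℕ, ∀ P : V → ℕ → L, (∀ v, IsPath linit κ (P v)) →
        run q₀ δ (fun i => {x : AP × V | x.1 ∈ ℓ (P x.2 i)}) N ∈ F := by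
  classical
  set N := Fintype.card ((V → L) × Q) with hNdef
  refine ⟨N, fun P hP => ?_⟩
  by_contra hcon
  set u : ℕ → Set (AP × V) := fun i => {x : AP × V | x.1 ∈ ℓ (P x.2 i)} with hu
  -- F is absorbing along the run
  have hmono : ∀ k n, run q₀ δ u n ∈ F → run q₀ δ u (n + k) ∈ F := by
    intro k
    induction k with
    | zero => intro n hn; exact hn
    | succ k ih =>
      intro n hn
      have := ih n hn
      have : run q₀ δ u (n + k + 1) ∈ F := hSink _ this _
      exact this
  have hnotF : ∀ m ≤ N, run q₀ δ u m ∉ F := by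
    intro m hm hF
    have := hmono (N - m) m hF
    rw [Nat.add_sub_cancel' hm] at this
    exact hcon this
  -- pigeonhole on configurations
  set c : Fin (N + 1) → ((V → L) × Q) := fun n => (fun v => P v n, run q₀ δ u n) with hc
  obtain ⟨a, b, hab, hcab⟩ := Fintype.exists_ne_map_eq_of_card_lt c
    (by rw [Fintype.card_fin]; omega)
  -- reduce to i < j case
  have key : ∀ i j : ℕ, i < j → j ≤ N → (∀ v, P v i = P v j) →
      run q₀ δ u i = run q₀ δ u j → False := by
    intro i j hij hjN heq hq
    set p := j - i with hp
    have hppos : 0 < p := by omega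
    set φ : ℕ → ℕ := fun n => if n < j then n else i + (n - i) % p with hφ
    have hφle : ∀ n, φ n ≤ N := by
      intro n
      simp only [hφ]
      split
      · omega
      · have := Nat.mod_lt (n - i) hppos
        omega
    have hstep : ∀ n, φ (n + 1) = φ n + 1 ∨ (φ n + 1 = j ∧ φ (n + 1) = i) := by
      intro n
      rcases lt_trichotomy (n + 1) j with h1 | h1 | h1
      · left
        have e1 : φ (n + 1) = n + 1 := by simp only [hφ]; rw [if_pos h1]
        have e2 : φ n = n := by simp only [hφ]; rw [if_pos (by omega)]
        rw [e1, e2]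
      · right
        have e1 : φ (n + 1) = i := by
          simp only [hφ]
          rw [if_neg (by omega)]
          have e : n + 1 - i = p := by omega
          rw [e, Nat.mod_self]
          omega
        have e2 : φ n = n := by simp only [hφ]; rw [if_pos (by omega)]
        exact ⟨by rw [e2]; omega, e1⟩
      · have hsum : n + 1 - i = (n - i) + 1 := by omega
        have e1 : φ (n + 1) = i + ((n - i) % p + 1) % p := by
          simp only [hφ]
          rw [if_neg (by omega), hsum, ← Nat.mod_add_mod]
        have e2 : φ n = i + (n - i) % p := by
          simp only [hφ]
          rw [if_neg (by omega)]
        have hr := Nat.mod_lt (n - i) hppos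
        rcases Nat.lt_or_ge ((n - i) % p + 1) p with h2 | h2
        · left
          rw [e1, e2, Nat.mod_eq_of_lt h2]
          exact (Nat.add_assoc i _ 1).symm
        · right
          have h3 : (n - i) % p + 1 = p := Nat.le_antisymm hr h2
          rw [h3, Nat.mod_self] at e1
          refine ⟨?_, by simpa using e1⟩
          rw [e2, Nat.add_assoc, h3]
          omega
    set P' : V → ℕ → L := fun v n => P v (φ n) with hP'
    have hφ0 : φ 0 = 0 := by simp [hφ]; omega
    have hpath : ∀ v, IsPath linit κ (P' v) := by
      intro v
      constructor
      · simp [hP', hφ0, (hP v).1]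
      · intro n
        rcases hstep n with hs | ⟨hs1, hs2⟩
        · obtain ⟨d, hd⟩ := (hP v).2 (φ n)
          exact ⟨d, by simp [hP', hs, hd]⟩
        · obtain ⟨d, hd⟩ := (hP v).2 (φ n)
          rw [hs1] at hd
          exact ⟨d, by simp [hP', hs2, ← hd, heq v]⟩
    set u' : ℕ → Set (AP × V) := fun n => {x : AP × V | x.1 ∈ ℓ (P' x.2 n)} with hu'
    have huu : ∀ n, u' n = u (φ n) := fun n => rfl
    have hrun : ∀ n, run q₀ δ u' n = run q₀ δ u (φ n) := by
      intro n
      induction n with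
      | zero => simp [run, hφ0]
      | succ n ih =>
        have : run q₀ δ u' (n + 1) = δ (run q₀ δ u (φ n)) (u (φ n)) := by
          rw [show run q₀ δ u' (n + 1) = δ (run q₀ δ u' n) (u' n) from rfl, ih, huu]
        rw [this]
        rcases hstep n with hs | ⟨hs1, hs2⟩
        · rw [hs]; rfl
        · have : δ (run q₀ δ u (φ n)) (u (φ n)) = run q₀ δ u (φ n + 1) := rfl
          rw [this, hs1, hs2, ← hq]
    obtain ⟨m, hm⟩ := h P' hpath
    have hm' : run q₀ δ u' m ∈ F := hm
    rw [hrun m] at hm'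
    exact hnotF (φ m) (hφle m) hm'
  have hPeq : ∀ v (n : Fin (N + 1)), (c n).1 v = P v n := fun v n => rfl
  rcases hab.lt_or_gt with hlt | hlt
  · exact key a b hlt (by omega)
      (fun v => by rw [← hPeq v a, ← hPeq v b, hcab])
      (by have := congrArg Prod.snd hcab; exact this)
  · exact key b a hlt (by omega)
      (fun v => by rw [← hPeq v a, ← hPeq v b, hcab])
      (by have := congrArg Prod.snd hcab; exact this.symm)
end

section
/- Let T = (L, l_init, D, κ, ℓ) be a finite TS and φ = ∃π₁...∃πₙ.∀πₙ₊₁...∀πₙ₊ₘ. ψ an ∃*∀* HyperLTL formula whose body ψ is tracked by a DFA A_ψ with sink accepting states. If the conformant planning problem P_{T,φ} (whose states are (n+m)-tuples of locations paired with a DFA state, whose actions are n-tuples of directions updating the first n locations deterministically and the last m locations non-deterministically over all directions, with the DFA state updated deterministically, initial state (l_init,...,l_init,q₀), and goal states those whose DFA component is accepting) admits a conformant plan, then T ⊨ φ. -/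
/-!
The existential paths follow the directions of the plan (continued arbitrarily after its end).
For any choice of universal paths, the tuple of all current locations together with the run of
the DFA on the induced word is a trajectory of the plan through its belief states, so after the
last action the DFA is in an accepting state, and the word satisfies the body.
-/

open scoped Classical

/-- An action of a non-deterministic planning problem. -/
structure PAct (S : Type*) where
  pre : Set S
  eff : S → Set S

/-- Belief-state execution semantics of a plan: `none` means undefined. -/
noncomputable def exec {S : Type*} (T : Set S) : List (PAct S) → Option (Set S)
  | [] => some T
  | a :: σ => if T ⊆ a.pre then exec (⋃ s ∈ T, a.eff s) σ else none

/-- A plan is conformant if its execution from the initial state is defined and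
ends inside the goal set. -/
def Conformant {S : Type*} (s₀ : S) (G : Set S) (σ : List (PAct S)) : Prop :=
  ∃ R : Set S, exec {s₀} σ = some R ∧ R ⊆ G

/-- The letter (over `AP × Fin nm`) obtained from a tuple of locations via the labeling. -/
def letterOf {L AP : Type*} (nm : ℕ) (ℓ : L → Set AP) (ls : Fin nm → L) :
    Set (AP × Fin nm) :=
  {x | x.1 ∈ ℓ (ls x.2)}

/-- The action of the product planning problem `P_{T,φ}` associated with an
`n`-tuple of directions: the first `n` locations are updated deterministically,
the last `m` locations non-deterministically over all directions, and the DFA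
state is updated deterministically from the current letter. -/
def prodAct {L D AP Q : Type*} (n m : ℕ) (κ : L → D → L) (ℓ : L → Set AP)
    (δ : Q → Set (AP × Fin (n + m)) → Q) (dv : Fin n → D) :
    PAct ((Fin (n + m) → L) × Q) where
  pre := Set.univ
  eff := fun st =>
    { st' | ∃ du : Fin m → D,
        st' = (fun i => κ (st.1 i) (Fin.append dv du i),
               δ st.2 (letterOf (n + m) ℓ st.1)) }

/-- `T ⊨ ∃π₁…∃πₙ.∀πₙ₊₁…∀πₙ₊ₘ. ψ`, where `Sat` is the semantics of the body `ψ`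
on infinite words over `2^{AP × {π₁,…,πₙ₊ₘ}}`. -/
def ModelsEA {L D AP : Type*} (n m : ℕ) (linit : L) (κ : L → D → L) (ℓ : L → Set AP)
    (Sat : (ℕ → Set (AP × Fin (n + m))) → Prop) : Prop :=
  ∃ pe : Fin n → ℕ → L, (∀ i, IsPath linit κ (pe i)) ∧
    ∀ pu : Fin m → ℕ → L, (∀ j, IsPath linit κ (pu j)) →
      Sat (fun i => letterOf (n + m) ℓ (fun v => Fin.append pe pu v i))

theorem mem_of_exec_eq_some {S : Type*} (σ : List (PAct S)) {T R : Set S} {f : ℕ → S}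
    (hexec : exec T σ = some R) (h₀ : f 0 ∈ T)
    (hstep : ∀ k (hk : k < σ.length), f (k + 1) ∈ σ[k].eff (f k)) :
    f σ.length ∈ R := by
  induction σ generalizing T f with
  | nil =>
    simp only [exec, Option.some.injEq] at hexec
    exact hexec ▸ h₀
  | cons a σ ih =>
    by_cases hpre : T ⊆ a.pre
    · rw [exec, if_pos hpre] at hexec
      exact ih (f := fun k => f (k + 1)) hexec
        (Set.mem_biUnion h₀ (hstep 0 (Nat.succ_pos _)))
        (fun k hk => hstep (k + 1) (Nat.succ_lt_succ hk))
    · rw [exec, if_neg hpre] at hexec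
      exact absurd hexec (Option.some_ne_none R).symm

theorem isPath_run {L D : Type*} (linit : L) (κ : L → D → L) (ds : ℕ → D) :
    IsPath linit κ (run linit κ ds) :=
  ⟨rfl, fun i => ⟨ds i, rfl⟩⟩

theorem Fin.append_apply_of_forall {α : Type*} {n m : ℕ} {p : α → Prop}
    (u : Fin n → α) (v : Fin m → α) (hu : ∀ i, p (u i)) (hv : ∀ j, p (v j)) (x : Fin (n + m)) :
    p (Fin.append u v x) :=
  Fin.addCases (fun i => by simpa using hu i) (fun j => by simpa using hv j) x

section Product

variable {L D AP Q : Type*} {n m : ℕ} (κ : L → D → L) (ℓ : L → Set AP)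
  (δ : Q → Set (AP × Fin (n + m)) → Q)

theorem mem_prodAct_eff {pe : Fin n → ℕ → L} {pu : Fin m → ℕ → L} {k : ℕ} (q : Q)
    (dv : Fin n → D) (du : Fin m → D)
    (hpe : ∀ i, pe i (k + 1) = κ (pe i k) (dv i)) (hpu : ∀ j, pu j (k + 1) = κ (pu j k) (du j)) :
    ((fun v => Fin.append pe pu v (k + 1)),
        δ q (letterOf (n + m) ℓ (fun v => Fin.append pe pu v k))) ∈
      (prodAct n m κ ℓ δ dv).eff ((fun v => Fin.append pe pu v k), q) := by
  refine ⟨du, Prod.ext (funext fun v => ?_) rfl⟩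
  refine Fin.addCases (fun i => ?_) (fun j => ?_) v <;> simp [hpe, hpu]

theorem append_run_mem_of_exec_eq_some (linit : L) (q₀ : Q) (plan : List (Fin n → D))
    {R : Set ((Fin (n + m) → L) × Q)}
    (hexec : exec {(fun _ => linit, q₀)} (plan.map (prodAct n m κ ℓ δ)) = some R)
    {pe : Fin n → ℕ → L} {pu : Fin m → ℕ → L} (hpe₀ : ∀ i, pe i 0 = linit)
    (hpe : ∀ i k (hk : k < plan.length), pe i (k + 1) = κ (pe i k) (plan[k] i))
    (hpu : ∀ j, IsPath linit κ (pu j)) :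
    ((fun v => Fin.append pe pu v plan.length),
        run q₀ δ (fun k => letterOf (n + m) ℓ (fun v => Fin.append pe pu v k)) plan.length) ∈ R := by
  choose du hdu using fun j => (hpu j).2
  have hinit : (fun v => Fin.append pe pu v 0) = fun _ => linit :=
    funext (Fin.append_apply_of_forall (p := fun x => x 0 = linit) pe pu hpe₀ fun j => (hpu j).1)
  simpa only [List.length_map] using mem_of_exec_eq_some _ hexec
    (f := fun k => ((fun v => Fin.append pe pu v k),
      run q₀ δ (fun k => letterOf (n + m) ℓ (fun v => Fin.append pe pu v k)) k))
    (Set.mem_singleton_iff.2 (Prod.ext hinit rfl))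
    (fun k hk => by
      rw [List.getElem_map]
      exact mem_prodAct_eff κ ℓ δ _ _ (fun j => du j k)
        (fun i => hpe i k (by simpa using hk)) (fun j => hdu j k))

end Product

theorem stmt6_general {L D AP Q : Type*} [Nonempty D]
    (n m : ℕ) (linit : L) (κ : L → D → L) (ℓ : L → Set AP)
    (q₀ : Q) (δ : Q → Set (AP × Fin (n + m)) → Q) (F : Set Q)
    (Sat : (ℕ → Set (AP × Fin (n + m))) → Prop)
    (hAcc : ∀ u : ℕ → Set (AP × Fin (n + m)), (∃ i, run q₀ δ u i ∈ F) ↔ Sat u)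
    (hplan : ∃ plan : List (Fin n → D),
        Conformant ((fun _ => linit, q₀) : (Fin (n + m) → L) × Q)
          {st | st.2 ∈ F} (plan.map (prodAct n m κ ℓ δ))) :
    ModelsEA n m linit κ ℓ Sat := by
  obtain ⟨plan, R, hexec, hRF⟩ := hplan
  obtain ⟨d⟩ := ‹Nonempty D›
  let dirs : ℕ → Fin n → D := fun k => plan.getD k fun _ => d
  refine ⟨fun i => run linit κ fun k => dirs k i, fun i => isPath_run linit κ _,
    fun pu hpu => (hAcc _).1 ⟨plan.length, hRF <|
      append_run_mem_of_exec_eq_some κ ℓ δ linit q₀ plan hexec (fun _ => rfl) (fun i k hk => ?_) hpu⟩⟩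
  exact congrArg (κ _) (congrFun (List.getD_eq_getElem _ _ hk) i)

/-- Soundness of the product planning encoding: if the conformant planning
problem `P_{T,φ}` admits a conformant plan, then `T ⊨ φ`. -/
theorem stmt6 {L D AP Q : Type*} [Fintype L] [Fintype D] [Fintype Q] [Nonempty D]
    (n m : ℕ) (linit : L) (κ : L → D → L) (ℓ : L → Set AP)
    (q₀ : Q) (δ : Q → Set (AP × Fin (n + m)) → Q) (F : Set Q)
    (hSink : ∀ q ∈ F, ∀ σ : Set (AP × Fin (n + m)), δ q σ ∈ F)
    (Sat : (ℕ → Set (AP × Fin (n + m))) → Prop)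
    (hAcc : ∀ u : ℕ → Set (AP × Fin (n + m)), (∃ i, run q₀ δ u i ∈ F) ↔ Sat u)
    (hplan : ∃ plan : List (Fin n → D),
        Conformant ((fun _ => linit, q₀) : (Fin (n + m) → L) × Q)
          {st | st.2 ∈ F} (plan.map (prodAct n m κ ℓ δ))) :
    ModelsEA n m linit κ ℓ Sat :=
  stmt6_general n m linit κ ℓ q₀ δ F Sat hAcc hplan
end

section
/- Let T be a finite TS and φ = ∃π₁...∃πₙ.∀πₙ₊₁...∀πₙ₊ₘ. ψ an ∃*∀* HyperLTL formula whose body ψ is tracked by a DFA A_ψ with sink accepting states. If T ⊨ φ, then the conformant planning problem P_{T,φ} admits a conformant plan. -/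
open scoped Classical

private def pathOfD {L D : Type*} {m : ℕ} (linit : L) (κ : L → D → L)
    (du : ℕ → Fin m → D) (j : Fin m) : ℕ → L
  | 0 => linit
  | t + 1 => κ (pathOfD linit κ du j t) (du t j)

private lemma pathOfD_congr {L D : Type*} {m : ℕ} (linit : L) (κ : L → D → L)
    {du du' : ℕ → Fin m → D} (j : Fin m) :
    ∀ t : ℕ, (∀ s < t, du s = du' s) →
      pathOfD linit κ du j t = pathOfD linit κ du' j t
  | 0, _ => rfl
  | t + 1, h => by
    rw [pathOfD, pathOfD,
      pathOfD_congr linit κ j t (fun s hs => h s (hs.trans (Nat.lt_succ_self t))),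
      h t (Nat.lt_succ_self t)]

private lemma run_congr {Q A : Type*} (q₀ : Q) (δ : Q → A → Q) {u u' : ℕ → A} :
    ∀ t : ℕ, (∀ s < t, u s = u' s) → run q₀ δ u t = run q₀ δ u' t
  | 0, _ => rfl
  | t + 1, h => by
    rw [run, run, run_congr q₀ δ t (fun s hs => h s (hs.trans (Nat.lt_succ_self t))),
      h t (Nat.lt_succ_self t)]

private lemma append_eval {L : Type*} {n m : ℕ} (f : Fin n → ℕ → L) (g : Fin m → ℕ → L)
    (k : ℕ) (v : Fin (n + m)) :
    Fin.append (fun i => f i k) (fun j => g j k) v = Fin.append f g v k := by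
  induction v using Fin.addCases with
  | left i => simp [Fin.append_left]
  | right j => simp [Fin.append_right]

/-- Completeness of the product planning encoding: if `T ⊨ φ`, then the
conformant planning problem `P_{T,φ}` admits a conformant plan. -/
theorem stmt7 {L D AP Q : Type*} [Fintype L] [Fintype D] [Fintype Q] [Nonempty D]
    (n m : ℕ) (linit : L) (κ : L → D → L) (ℓ : L → Set AP)
    (q₀ : Q) (δ : Q → Set (AP × Fin (n + m)) → Q) (F : Set Q)
    (hSink : ∀ q ∈ F, ∀ σ : Set (AP × Fin (n + m)), δ q σ ∈ F)
    (Sat : (ℕ → Set (AP × Fin (n + m))) → Prop)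
    (hAcc : ∀ u : ℕ → Set (AP × Fin (n + m)), (∃ i, run q₀ δ u i ∈ F) ↔ Sat u)
    (hmod : ModelsEA n m linit κ ℓ Sat) :
    ∃ plan : List (Fin n → D),
      Conformant ((fun _ => linit, q₀) : (Fin (n + m) → L) × Q)
        {st | st.2 ∈ F} (plan.map (prodAct n m κ ℓ δ)) := by
  classical
  obtain ⟨pe, hpe, hsat⟩ := hmod
  choose de hde using fun i => (hpe i).2
  -- universal paths from direction sequences
  set P : (ℕ → Fin m → D) → Fin m → ℕ → L := fun du j => pathOfD linit κ du j with hP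
  set w : (ℕ → Fin m → D) → ℕ → Set (AP × Fin (n + m)) :=
    fun du i => letterOf (n + m) ℓ (fun v => Fin.append pe (P du) v i) with hw
  have key : ∀ du, ∃ i, run q₀ δ (w du) i ∈ F := by
    intro du
    exact (hAcc (w du)).mpr (hsat (P du) (fun j => ⟨rfl, fun t => ⟨du t j, rfl⟩⟩))
  have wcongr : ∀ (du du' : ℕ → Fin m → D) (i : ℕ), (∀ s, s < i → du s = du' s) →
      w du i = w du' i := by
    intro du du' i h
    have hfun : (fun v => Fin.append pe (P du) v i) = fun v => Fin.append pe (P du') v i := by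
      funext v
      induction v using Fin.addCases with
      | left a => simp [Fin.append_left]
      | right j =>
        simp only [Fin.append_right]
        exact pathOfD_congr linit κ j i h
    simp only [hw, hfun]
  have runcongr : ∀ (du du' : ℕ → Fin m → D) (k : ℕ), (∀ s, s < k → du s = du' s) →
      run q₀ δ (w du) k = run q₀ δ (w du') k := by
    intro du du' k h
    exact run_congr q₀ δ k (fun s hs => wcongr du du' s (fun t ht => h t (ht.trans hs)))
  -- compactness: uniform bound N
  letI : TopologicalSpace D := ⊥
  haveI : DiscreteTopology D := ⟨rfl⟩
  have hmono : Monotone (fun i => {du : ℕ → Fin m → D | run q₀ δ (w du) i ∈ F}) := by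
    apply monotone_nat_of_le_succ
    intro i du hdu
    exact hSink _ hdu _
  have hopen : ∀ i, IsOpen {du : ℕ → Fin m → D | run q₀ δ (w du) i ∈ F} := by
    intro i
    have hres : Continuous (fun du : ℕ → Fin m → D => fun t : Fin i => du t.val) :=
      continuous_pi fun t => continuous_apply _
    have heq : {du : ℕ → Fin m → D | run q₀ δ (w du) i ∈ F} =
        (fun du : ℕ → Fin m → D => fun t : Fin i => du t.val) ⁻¹'
          ((fun du : ℕ → Fin m → D => fun t : Fin i => du t.val) ''
            {du | run q₀ δ (w du) i ∈ F}) := by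
      apply subset_antisymm (Set.subset_preimage_image _ _)
      rintro du ⟨du', hdu', hres'⟩
      have : run q₀ δ (w du') i = run q₀ δ (w du) i :=
        runcongr du' du i (fun s hs => congrFun hres' ⟨s, hs⟩)
      simpa [Set.mem_setOf_eq, ← this] using hdu'
    rw [heq]
    exact (isOpen_discrete _).preimage hres
  have hcover : (Set.univ : Set (ℕ → Fin m → D)) ⊆
      ⋃ i, {du | run q₀ δ (w du) i ∈ F} := by
    intro du _
    obtain ⟨i, hi⟩ := key du
    exact Set.mem_iUnion.mpr ⟨i, hi⟩
  obtain ⟨s, hs⟩ := isCompact_univ.elim_finite_subcover _ hopen hcover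
  set N := s.sup id with hNdef
  have hAll : ∀ du, run q₀ δ (w du) N ∈ F := by
    intro du
    obtain ⟨i, hi, hmem⟩ := Set.mem_iUnion₂.mp (hs (Set.mem_univ du))
    exact hmono (Finset.le_sup (f := id) hi) hmem
  -- reachable sets
  set act : ℕ → PAct ((Fin (n + m) → L) × Q) :=
    fun t => prodAct n m κ ℓ δ (fun i => de i t) with hact
  set Rset : ℕ → Set ((Fin (n + m) → L) × Q) := fun k =>
    { st | ∃ du : ℕ → Fin m → D,
        st = (fun v => Fin.append (fun i => pe i k) (fun j => P du j k) v,
              run q₀ δ (w du) k) } with hRdef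
  have hstep : ∀ k, (⋃ st ∈ Rset k, (act k).eff st) = Rset (k + 1) := by
    intro k
    apply subset_antisymm
    · rintro st' hst'
      simp only [Set.mem_iUnion] at hst'
      obtain ⟨st, ⟨du, rfl⟩, hst'⟩ := hst'
      simp only [hact, prodAct, Set.mem_setOf_eq] at hst'
      obtain ⟨du', rfl⟩ := hst'
      refine ⟨fun t => if t = k then du' else du t, ?_⟩
      set du'' : ℕ → Fin m → D := fun t => if t = k then du' else du t with hdu''
      have hagree : ∀ t, t < k → du'' t = du t := by
        intro t ht
        simp [hdu'', Nat.ne_of_lt ht]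
      have hPk : ∀ j, P du'' j k = P du j k := fun j => pathOfD_congr linit κ j k hagree
      have hPk1 : ∀ j, P du'' j (k + 1) = κ (P du j k) (du' j) := by
        intro j
        show pathOfD linit κ du'' j (k + 1) = _
        rw [pathOfD]
        have : du'' k = du' := by simp [hdu'']
        rw [this]
        exact congrArg (fun x => κ x (du' j)) (hPk j)
      have hwk : w du'' k = w du k := wcongr du'' du k hagree
      have hrk : run q₀ δ (w du'') k = run q₀ δ (w du) k := runcongr du'' du k hagree
      have hlet : letterOf (n + m) ℓ (fun v => Fin.append (fun i => pe i k) (fun j => P du j k) v)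
          = w du k := by
        simp only [hw]
        exact congrArg (letterOf (n + m) ℓ) (funext fun v => append_eval pe (P du) k v)
      refine Prod.ext ?_ ?_
      · funext v
        induction v using Fin.addCases with
        | left i =>
          simp only [Fin.append_left]
          exact ((hde i k).symm)
        | right j =>
          simp only [Fin.append_right]
          exact (hPk1 j).symm
      · show δ (run q₀ δ (w du) k) _ = run q₀ δ (w du'') (k + 1)
        rw [run, hrk, hwk, hlet]
    · rintro st ⟨du, rfl⟩
      simp only [Set.mem_iUnion]
      refine ⟨(fun v => Fin.append (fun i => pe i k) (fun j => P du j k) v,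
               run q₀ δ (w du) k), ⟨du, rfl⟩, ?_⟩
      simp only [hact, prodAct, Set.mem_setOf_eq]
      refine ⟨du k, ?_⟩
      have hlet : letterOf (n + m) ℓ (fun v => Fin.append (fun i => pe i k) (fun j => P du j k) v)
          = w du k := by
        simp only [hw]
        exact congrArg (letterOf (n + m) ℓ) (funext fun v => append_eval pe (P du) k v)
      refine Prod.ext ?_ ?_
      · funext v
        induction v using Fin.addCases with
        | left i =>
          simp only [Fin.append_left]
          exact hde i k
        | right j =>
          simp only [Fin.append_right]
          rfl
      · show run q₀ δ (w du) (k + 1) = δ (run q₀ δ (w du) k) _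
        rw [run, hlet]
  have hexec : ∀ (a k : ℕ), exec (Rset k) ((List.range' k a).map act) = some (Rset (k + a)) := by
    intro a
    induction a with
    | zero => intro k; simp [exec]
    | succ a ih =>
      intro k
      rw [List.range'_succ, List.map_cons]
      show exec (Rset k) (act k :: _) = _
      rw [exec]
      rw [if_pos (by simp [hact, prodAct])]
      rw [hstep k, ih (k + 1)]
      have harith : k + 1 + a = k + (a + 1) := by omega
      rw [harith]
  have h0 : ({((fun _ => linit, q₀) : (Fin (n + m) → L) × Q)} : Set _) = Rset 0 := by
    apply subset_antisymm
    · rintro st rfl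
      refine ⟨fun _ _ => Classical.arbitrary D, ?_⟩
      refine Prod.ext ?_ rfl
      funext v
      induction v using Fin.addCases with
      | left i => simp [Fin.append_left, (hpe i).1]
      | right j => simp [Fin.append_right]; rfl
    · rintro st ⟨du, rfl⟩
      have : (fun v => Fin.append (fun i => pe i 0) (fun j => P du j 0) v)
          = fun _ : Fin (n + m) => linit := by
        funext v
        induction v using Fin.addCases with
        | left i => simp [Fin.append_left, (hpe i).1]
        | right j => simp [Fin.append_right]; rfl
      simp [this, run]
  refine ⟨(List.range N).map (fun t => fun i => de i t), Rset N, ?_, ?_⟩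
  · have hplan : ((List.range N).map (fun t => fun i => de i t)).map (prodAct n m κ ℓ δ)
        = (List.range' 0 N).map act := by
      rw [List.map_map, List.range_eq_range']
      rfl
    rw [hplan, h0, hexec N 0, Nat.zero_add]
  · rintro st ⟨du, rfl⟩
    exact hAll du
end

section
/- If a planning problem P admits a conformant plan, then its associated transition system T_P satisfies the HyperLTL formula φ_P = ∃π₁.∀π₂. (F goal_{π₂}) ∨ F(⋁_{a∈O} (act_a)_{π₁} ↮ (act_a)_{π₂}). -/
open scoped Classical

/-- Belief-state execution semantics of a plan over actions indexed by `A`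
(with precondition `pre` and non-deterministic effect `eff`): `none` means undefined. -/
noncomputable def execA {S A : Type*} (pre : A → Set S) (eff : A → S → Set S)
    (T : Set S) : List A → Option (Set S)
  | [] => some T
  | a :: σ => if T ⊆ pre a then execA pre eff (⋃ s ∈ T, eff a s) σ else none

/-- A plan is conformant if its execution from the initial state is defined and
ends inside the goal set. -/
def ConformantA {S A : Type*} (pre : A → Set S) (eff : A → S → Set S)
    (s₀ : S) (G : Set S) (σ : List A) : Prop :=
  ∃ R : Set S, execA pre eff {s₀} σ = some R ∧ R ⊆ G

/-- The transition relation of the transition system `T_P` built from a planning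
problem: locations are pairs of an optional planning state (`none` is the error
location `↯`) and the last-played action. -/
def TPstep {S A : Type*} (pre : A → Set S) (eff : A → S → Set S)
    (l l' : Option S × A) : Prop :=
  match l.1, l'.1 with
  | some s, some s' => s ∈ pre l'.2 ∧ s' ∈ eff l'.2 s
  | some s, none => s ∉ pre l'.2
  | none, some _ => False
  | none, none => True

/-- A path of `T_P`: it starts in the initial location `(s₀, a₀)` and follows
the transition relation. -/
def TPIsPath {S A : Type*} (pre : A → Set S) (eff : A → S → Set S)
    (s₀ : S) (a₀ : A) (p : ℕ → Option S × A) : Prop :=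
  p 0 = (some s₀, a₀) ∧ ∀ i, TPstep pre eff (p i) (p (i + 1))

/-- The atomic proposition `goal` holds at position `i` of path `p` iff the
location records a planning state in `G`. -/
def goalAt {S A : Type*} (G : Set S) (p : ℕ → Option S × A) (i : ℕ) : Prop :=
  ∃ s : S, (p i).1 = some s ∧ s ∈ G

/-- `T_P ⊨ φ_P`, where
`φ_P = ∃π₁.∀π₂. (F goal_{π₂}) ∨ F(⋁_{a∈O} (act_a)_{π₁} ↮ (act_a)_{π₂})`:
`act_a` holds at a location iff its recorded action component equals `a`. -/
def ModelsPhiP {S A : Type*} (pre : A → Set S) (eff : A → S → Set S)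
    (G : Set S) (s₀ : S) (a₀ : A) : Prop :=
  ∃ p₁ : ℕ → Option S × A, TPIsPath pre eff s₀ a₀ p₁ ∧
    ∀ p₂ : ℕ → Option S × A, TPIsPath pre eff s₀ a₀ p₂ →
      (∃ i, goalAt G p₂ i) ∨
      ∃ i, ∃ a : A, ¬ (((p₁ i).2 = a) ↔ ((p₂ i).2 = a))

noncomputable def nextSt {S A : Type*} (pre : A → Set S) (eff : A → S → Set S)
    (hEff : ∀ (a : A) (s : S), s ∈ pre a → (eff a s).Nonempty) (a : A) :
    Option S → Option S
  | some s => if h : s ∈ pre a then some (hEff a s h).some else none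
  | none => none

noncomputable def stSeq {S A : Type*} (pre : A → Set S) (eff : A → S → Set S)
    (hEff : ∀ (a : A) (s : S), s ∈ pre a → (eff a s).Nonempty)
    (act : ℕ → A) (s₀ : S) : ℕ → Option S
  | 0 => some s₀
  | n+1 => nextSt pre eff hEff (act n) (stSeq pre eff hEff act s₀ n)

def beliefSeq {S A : Type*} (eff : A → S → Set S) (act : ℕ → A) (s₀ : S) :
    ℕ → Set S
  | 0 => {s₀}
  | n+1 => ⋃ s ∈ beliefSeq eff act s₀ n, eff (act n) s

lemma exec_key {S A : Type*} (pre : A → Set S) (eff : A → S → Set S) (a₀ : A) :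
    ∀ (σ : List A) (T R : Set S), execA pre eff T σ = some R →
      ∀ (C : ℕ → Set S), C 0 = T →
        (∀ n, C (n+1) = ⋃ s ∈ C n, eff (σ.getD n a₀) s) →
        (∀ n, n < σ.length → C n ⊆ pre (σ.getD n a₀)) ∧ C σ.length = R
  | [], T, R, h, C, h0, _ => by
      simp only [execA, Option.some.injEq] at h
      exact ⟨fun n hn => absurd hn (by simp), by rw [List.length_nil, h0, h]⟩
  | a :: σ, T, R, h, C, h0, hstep => by
      rw [execA] at h
      by_cases hT : T ⊆ pre a
      · rw [if_pos hT] at h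
        obtain ⟨h1, h2⟩ := exec_key pre eff a₀ σ (⋃ s ∈ T, eff a s) R h
          (fun n => C (n+1))
          (by show C 1 = _; rw [hstep 0, h0]; rfl)
          (fun n => by show C (n+2) = _; rw [hstep (n+1)]; rfl)
        refine ⟨?_, h2⟩
        intro n hn
        cases n with
        | zero => simpa [h0] using hT
        | succ m => exact h1 m (by simpa using hn)
      · rw [if_neg hT] at h; exact absurd h (by simp)

/-- If the planning problem `P` admits a conformant plan, then `T_P ⊨ φ_P`. -/
theorem stmt11 {S A : Type*} (pre : A → Set S) (eff : A → S → Set S)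
    (hEff : ∀ (a : A) (s : S), s ∈ pre a → (eff a s).Nonempty)
    (G : Set S) (s₀ : S) (a₀ : A)
    (hplan : ∃ σ : List A, ConformantA pre eff s₀ G σ) :
    ModelsPhiP pre eff G s₀ a₀ := by
  obtain ⟨σ, R, hexec, hRG⟩ := hplan
  set act : ℕ → A := fun n => σ.getD n a₀ with hact
  set B : ℕ → Set S := beliefSeq eff act s₀ with hB
  obtain ⟨hpre, hR⟩ := exec_key pre eff a₀ σ {s₀} R hexec B rfl (fun n => rfl)
  set actOf : ℕ → A := fun n => Nat.casesOn n a₀ (fun k => act k) with hactOf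
  set p₁ : ℕ → Option S × A := fun n => (stSeq pre eff hEff act s₀ n, actOf n) with hp₁
  have hpath₁ : TPIsPath pre eff s₀ a₀ p₁ := by
    constructor
    · rfl
    · intro i
      show TPstep pre eff (stSeq pre eff hEff act s₀ i, actOf i)
        (stSeq pre eff hEff act s₀ (i+1), actOf (i+1))
      cases hst : stSeq pre eff hEff act s₀ i with
      | none =>
          simp only [stSeq, hst, nextSt, TPstep]
      | some s =>
          by_cases hps : s ∈ pre (act i)
          · simp only [stSeq, hst, nextSt, dif_pos hps, TPstep]
            exact ⟨hps, (hEff (act i) s hps).some_mem⟩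
          · simp only [stSeq, hst, nextSt, dif_neg hps, TPstep]
            exact hps
  refine ⟨p₁, hpath₁, ?_⟩
  intro p₂ hp₂
  by_cases hsame : ∀ i, (p₂ i).2 = (p₁ i).2
  · left
    have claim : ∀ n, n ≤ σ.length → ∃ s, (p₂ n).1 = some s ∧ s ∈ B n := by
      intro n
      induction n with
      | zero =>
          intro _
          refine ⟨s₀, by rw [hp₂.1], ?_⟩
          show s₀ ∈ beliefSeq eff act s₀ 0
          simp [beliefSeq]
      | succ m ih =>
          intro hm
          obtain ⟨s, hst, hsB⟩ := ih (Nat.le_of_succ_le hm)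
          have hstep := hp₂.2 m
          have hact2 : (p₂ (m+1)).2 = act m := by
            rw [hsame (m+1)]
          have hspre : s ∈ pre (act m) := hpre m hm hsB
          cases hst' : (p₂ (m+1)).1 with
          | none =>
              simp only [TPstep, hst, hst'] at hstep
              rw [hact2] at hstep
              exact absurd hspre hstep
          | some s' =>
              simp only [TPstep, hst, hst'] at hstep
              rw [hact2] at hstep
              refine ⟨s', rfl, ?_⟩
              show s' ∈ beliefSeq eff act s₀ (m+1)
              rw [beliefSeq]
              exact Set.mem_biUnion hsB hstep.2
    obtain ⟨s, hst, hsB⟩ := claim σ.length le_rfl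
    exact ⟨σ.length, s, hst, hRG (hR ▸ hsB)⟩
  · right
    push_neg at hsame
    obtain ⟨i, hi⟩ := hsame
    exact ⟨i, (p₁ i).2, by simp [hi]⟩
end
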